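/- Let X be a real Banach space, let (A_i) be an approximation scheme in X, and let Y be a closed linear subspace of X satisfying Shapiro's Theorem relative to (A_i). Then there exists δ > 0 such that every closed linear subspace Z of X with E(S(Y), Z) < δ also satisfies Shapiro's Theorem relative to (A_i). -/

import Mathlib

open Metric Filter Pointwise

/-- `(A, K)` is an approximation scheme on `X`: the sets `A n` form a strictly increasing
chain, `A n + A n ⊆ A (K n)` with `K n ≥ n`, each `A n` is closed under scalar
multiplication, and `⋃ n, A n` is dense in `X`. -/
def IsApproximationScheme {X : Type*} [NormedAddCommGroup X] [NormedSpace ℝ X]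
    (A : ℕ → Set X) (K : ℕ → ℕ) : Prop :=
  (∀ n, A n ⊂ A (n + 1)) ∧
  (∀ n, n ≤ K n ∧ A n + A n ⊆ A (K n)) ∧
  (∀ (n : ℕ) (c : ℝ), c • A n ⊆ A n) ∧
  Dense (⋃ n, A n)

/-- Admissible error sequences: nonnegative, nonincreasing, tending to `0`. -/
def NullSeq (ε : ℕ → ℝ) : Prop :=
  (∀ n, 0 ≤ ε n) ∧ Antitone ε ∧ Tendsto ε atTop (nhds 0)

/-- `E(S(Y), Z)`: the supremum of the best approximation errors `E(y, Z)` over the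
unit sphere of `Y`. -/
noncomputable def sphereSupDist {X : Type*} [NormedAddCommGroup X] (Y Z : Set X) : ℝ :=
  sSup ((fun y => Metric.infDist y Z) '' {y ∈ Y | ‖y‖ = 1})

/-!
Let `d n = E(S(Y), A n)`. Then `E(y, A n) ≤ ‖y‖ d n` on `Y`, and `d` is nonincreasing from
`n = 1` on (`A 0` may be empty, making `d 0 = 0`). If `d` tended to `0`, a null sequence
dominating it would contradict Shapiro's Theorem for `Y`. Hence `d n ≥ c > 0` eventually,
and we take `δ = c / 2`.

If a closed subspace `Z` failed Shapiro's Theorem for some `ε`, then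
`Z = ⋃_C {z | E(z, A n) ≤ C ε n}`, and Baire's theorem gives a ball in `Z` on which
`E(z, A n) ≤ C ε n` uniformly. Translating the ball to the origin costs the passage from `A n`
to `A (K n)`, and rescaling gives `E(z, A (K n)) ≤ L ε n ‖z‖` on all of `Z`. Approximating the
unit sphere of `Y` from `Z` to within `δ` then yields `c ≤ d (K n) ≤ δ + L ε n (1 + δ) → δ`,
contradicting `δ = c / 2`.
-/

section InfDist

variable {X : Type*} [NormedAddCommGroup X] [NormedSpace ℝ X]

lemma smul_set_eq_of_forall_smul_subset {s : Set X} (hs : ∀ c : ℝ, c • s ⊆ s) {c : ℝ}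
    (hc : c ≠ 0) : c • s = s :=
  (hs c).antisymm ((Set.subset_smul_set_iff₀ hc).2 (hs c⁻¹))

lemma infDist_smul_of_forall_smul_subset {s : Set X} (hs : ∀ c : ℝ, c • s ⊆ s) (c : ℝ)
    (x : X) : infDist (c • x) s = |c| * infDist x s := by
  rcases eq_or_ne c 0 with rfl | hc
  · rcases s.eq_empty_or_nonempty with rfl | ⟨a, ha⟩
    · simp
    · simpa using infDist_zero_of_mem (hs 0 (Set.smul_mem_smul_set ha))
  · rw [← Real.norm_eq_abs, ← infDist_smul₀ hc, smul_set_eq_of_forall_smul_subset hs hc]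

lemma infDist_zero_of_forall_smul_subset {s : Set X} (hs : ∀ c : ℝ, c • s ⊆ s) :
    infDist (0 : X) s = 0 := by
  simpa using infDist_smul_of_forall_smul_subset hs 0 (0 : X)

lemma infDist_le_norm_of_forall_smul_subset {s : Set X} (hs : ∀ c : ℝ, c • s ⊆ s) (x : X) :
    infDist x s ≤ ‖x‖ := by
  simpa [infDist_zero_of_forall_smul_subset hs] using
    infDist_le_infDist_add_dist (x := x) (y := 0) (s := s)

lemma Submodule.smul_set_subset (Z : Submodule ℝ X) (c : ℝ) : c • (Z : Set X) ⊆ Z :=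
  Set.smul_set_subset_iff.2 fun _ hz => Z.smul_mem c hz

lemma infDist_add_le_of_add_subset {E : Type*} [SeminormedAddCommGroup E] {s t : Set E}
    (hs : s.Nonempty) (hst : s + s ⊆ t) (a b : E) :
    infDist (a + b) t ≤ infDist a s + infDist b s := by
  refine le_of_forall_pos_lt_add fun η hη => ?_
  obtain ⟨u, hu, hau⟩ := (infDist_lt_iff hs).1 (lt_add_of_pos_right (infDist a s) (half_pos hη))
  obtain ⟨v, hv, hbv⟩ := (infDist_lt_iff hs).1 (lt_add_of_pos_right (infDist b s) (half_pos hη))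
  calc infDist (a + b) t ≤ dist (a + b) (u + v) :=
        infDist_le_dist_of_mem (hst (Set.add_mem_add hu hv))
    _ ≤ dist a u + dist b v := dist_add_add_le a b u v
    _ < infDist a s + infDist b s + η := by linarith

lemma infDist_le_mul_norm_of_forall_norm_lt {Z : Submodule ℝ X} {s : Set X}
    (hs : ∀ c : ℝ, c • s ⊆ s) {r M : ℝ} (hr : 0 < r)
    (h : ∀ w ∈ Z, ‖w‖ < r → infDist w s ≤ M) {z : X} (hz : z ∈ Z) :
    infDist z s ≤ 2 * M / r * ‖z‖ := by
  rcases eq_or_ne z 0 with rfl | hz0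
  · simp [infDist_zero_of_forall_smul_subset hs]
  have hn : 0 < ‖z‖ := norm_pos_iff.2 hz0
  have ht : 0 < r / (2 * ‖z‖) := by positivity
  have hw : infDist ((r / (2 * ‖z‖)) • z) s ≤ M := by
    refine h _ (Z.smul_mem _ hz) ?_
    rw [norm_smul, Real.norm_eq_abs, abs_of_pos ht]
    field_simp
    linarith
  rw [infDist_smul_of_forall_smul_subset hs, abs_of_pos ht] at hw
  calc infDist z s ≤ M / (r / (2 * ‖z‖)) := by rw [le_div_iff₀ ht]; linarith
    _ = 2 * M / r * ‖z‖ := by field_simp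

end InfDist

section SphereSupDist

variable {X : Type*} [NormedAddCommGroup X]

lemma sphereSupDist_nonneg (Y s : Set X) : 0 ≤ sphereSupDist Y s :=
  Real.sSup_nonneg (by rintro _ ⟨y, -, rfl⟩; exact infDist_nonneg)

lemma sphereSupDist_le {Y s : Set X} {r : ℝ} (hr : 0 ≤ r)
    (h : ∀ y ∈ Y, ‖y‖ = 1 → infDist y s ≤ r) : sphereSupDist Y s ≤ r :=
  Real.sSup_le (by rintro _ ⟨y, ⟨hy, hy1⟩, rfl⟩; exact h y hy hy1) hr

variable [NormedSpace ℝ X]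

lemma infDist_le_sphereSupDist {Y s : Set X} (hs : ∀ c : ℝ, c • s ⊆ s) {y : X} (hy : y ∈ Y)
    (hy1 : ‖y‖ = 1) : infDist y s ≤ sphereSupDist Y s := by
  refine le_csSup ⟨1, ?_⟩ ⟨y, ⟨hy, hy1⟩, rfl⟩
  rintro _ ⟨u, ⟨-, hu1⟩, rfl⟩
  exact hu1 ▸ infDist_le_norm_of_forall_smul_subset hs u

lemma sphereSupDist_anti {Y s t : Set X} (hs : ∀ c : ℝ, c • s ⊆ s) (hne : s.Nonempty)
    (hst : s ⊆ t) : sphereSupDist Y t ≤ sphereSupDist Y s :=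
  sphereSupDist_le (sphereSupDist_nonneg Y s) fun _ hy hy1 =>
    (infDist_le_infDist_of_subset hst hne).trans (infDist_le_sphereSupDist hs hy hy1)

lemma infDist_le_norm_mul_sphereSupDist (Y : Submodule ℝ X) {s : Set X}
    (hs : ∀ c : ℝ, c • s ⊆ s) {y : X} (hy : y ∈ Y) :
    infDist y s ≤ ‖y‖ * sphereSupDist Y s := by
  rcases eq_or_ne y 0 with rfl | hy0
  · simp [infDist_zero_of_forall_smul_subset hs]
  have hn : 0 < ‖y‖ := norm_pos_iff.2 hy0
  calc infDist y s = ‖y‖ * infDist (‖y‖⁻¹ • y) s := by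
        rw [infDist_smul_of_forall_smul_subset hs, abs_inv, abs_norm, mul_inv_cancel_left₀ hn.ne']
    _ ≤ ‖y‖ * sphereSupDist Y s :=
        mul_le_mul_of_nonneg_left (infDist_le_sphereSupDist hs (Y.smul_mem _ hy)
          (by rw [norm_smul, norm_inv, norm_norm, inv_mul_cancel₀ hn.ne'])) hn.le

lemma sphereSupDist_le_of_infDist_le_mul_norm {Y s : Set X} {Z : Submodule ℝ X} {δ L : ℝ}
    (hδ : sphereSupDist Y Z < δ) (hL : 0 ≤ L) (h : ∀ z ∈ Z, infDist z s ≤ L * ‖z‖) :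
    sphereSupDist Y s ≤ δ + L * (1 + δ) := by
  have hδ0 : 0 ≤ δ := (sphereSupDist_nonneg Y Z).trans hδ.le
  refine sphereSupDist_le (by positivity) fun y hy hy1 => ?_
  obtain ⟨z, hz, hyz⟩ := (infDist_lt_iff ⟨0, Z.zero_mem⟩).1
    ((infDist_le_sphereSupDist Z.smul_set_subset hy hy1).trans_lt hδ)
  have hz1 : ‖z‖ ≤ 1 + δ := by
    have := norm_le_norm_add_norm_sub y z
    rw [hy1, ← dist_eq_norm] at this
    linarith
  calc infDist y s ≤ infDist z s + dist y z := infDist_le_infDist_add_dist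
    _ ≤ L * (1 + δ) + δ := add_le_add ((h z hz).trans (mul_le_mul_of_nonneg_left hz1 hL)) hyz.le
    _ = δ + L * (1 + δ) := add_comm _ _

end SphereSupDist

lemma exists_nullSeq_ge {u : ℕ → ℝ} (h0 : ∀ n, 0 ≤ u n) (hanti : Antitone fun n => u (n + 1))
    (hu : Tendsto u atTop (nhds 0)) : ∃ ε, NullSeq ε ∧ ∀ n, u n ≤ ε n := by
  refine ⟨fun n => max (u n) (u (n + 1)), ⟨fun n => (h0 n).trans (le_max_left _ _), ?_, ?_⟩,
    fun n => le_max_left _ _⟩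
  · exact antitone_nat_of_succ_le fun n =>
      max_le (le_max_right _ _) ((hanti n.le_succ).trans (le_max_right _ _))
  · simpa using hu.max (hu.comp (tendsto_add_atTop_nat 1))

lemma exists_ball_forall_le_mul_of_forall_exists {T : Type*} [PseudoMetricSpace T] [CompleteSpace T]
    [Nonempty T] {f : ℕ → T → ℝ} (hf : ∀ n, Continuous (f n)) {ε : ℕ → ℝ}
    (hε : ∀ n, 0 ≤ ε n) (h : ∀ t, ∃ C, ∀ n, f n t ≤ C * ε n) :
    ∃ t₀, ∃ r > 0, ∃ C ≥ (0 : ℝ), ∀ t ∈ ball t₀ r, ∀ n, f n t ≤ C * ε n := by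
  set g : ℕ → Set T := fun C => ⋂ n, {t | f n t ≤ C * ε n}
  have hg : ∀ C, IsClosed (g C) := fun C =>
    isClosed_iInter fun n => isClosed_le (hf n) continuous_const
  have hcover : ⋃ C, g C = Set.univ := Set.eq_univ_of_forall fun t => by
    obtain ⟨C, hC⟩ := h t
    exact Set.mem_iUnion.2 ⟨⌈C⌉₊, Set.mem_iInter.2 fun n =>
      (hC n).trans (mul_le_mul_of_nonneg_right (Nat.le_ceil C) (hε n))⟩
  obtain ⟨C, t₀, ht₀⟩ := nonempty_interior_of_iUnion_of_closed hg hcover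
  obtain ⟨r, hr, hball⟩ := Metric.isOpen_iff.1 isOpen_interior t₀ ht₀
  exact ⟨t₀, r, hr, C, C.cast_nonneg, fun t ht => Set.mem_iInter.1 (interior_subset (hball ht))⟩

namespace IsApproximationScheme

variable {X : Type*} [NormedAddCommGroup X] [NormedSpace ℝ X] {A : ℕ → Set X} {K : ℕ → ℕ}

lemma monotone (hA : IsApproximationScheme A K) : Monotone A :=
  monotone_nat_of_le_succ fun n => (hA.1 n).subset

lemma nonempty (hA : IsApproximationScheme A K) {n : ℕ} (hn : 1 ≤ n) : (A n).Nonempty := by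
  obtain ⟨x, hx, -⟩ := Set.exists_of_ssubset (hA.1 0)
  exact ⟨x, hA.monotone hn hx⟩

lemma exists_pos_eventually_le_sphereSupDist (hA : IsApproximationScheme A K)
    (Y : Submodule ℝ X)
    (hShapY : ∀ ε : ℕ → ℝ, NullSeq ε → ∃ y ∈ Y, ¬ ∃ C : ℝ, ∀ n, infDist y (A n) ≤ C * ε n) :
    ∃ c > 0, ∀ᶠ n in atTop, c ≤ sphereSupDist Y (A n) := by
  set d : ℕ → ℝ := fun n => sphereSupDist Y (A n)
  have hd0 : ∀ n, 0 ≤ d n := fun n => sphereSupDist_nonneg _ _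
  have hanti : Antitone fun n => d (n + 1) := antitone_nat_of_succ_le fun n =>
    sphereSupDist_anti (hA.2.2.1 _) (hA.nonempty n.succ_pos) (hA.monotone (n + 1).le_succ)
  have hbdd : BddBelow (Set.range fun n => d (n + 1)) := ⟨0, by rintro _ ⟨n, rfl⟩; exact hd0 _⟩
  have hlim := tendsto_atTop_ciInf hanti hbdd
  refine ⟨⨅ n, d (n + 1), ?_, (eventually_ge_atTop 1).mono fun n hn => ?_⟩
  · refine (le_ciInf fun n => hd0 _).lt_of_ne fun hc => ?_
    rw [← hc, tendsto_add_atTop_iff_nat 1] at hlim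
    obtain ⟨ε, hε, hdε⟩ := exists_nullSeq_ge hd0 hanti hlim
    obtain ⟨y, hy, hnot⟩ := hShapY ε hε
    exact hnot ⟨‖y‖, fun n => (infDist_le_norm_mul_sphereSupDist Y (hA.2.2.1 n) hy).trans
      (mul_le_mul_of_nonneg_left (hdε n) (norm_nonneg y))⟩
  · obtain ⟨m, rfl⟩ := Nat.exists_eq_add_of_le' hn
    exact hanti.le_of_tendsto hlim m

lemma exists_infDist_le_mul_norm [CompleteSpace X] (hA : IsApproximationScheme A K)
    {Z : Submodule ℝ X} (hZ : IsClosed (Z : Set X)) {ε : ℕ → ℝ} (hε : ∀ n, 0 ≤ ε n)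
    (h : ∀ z ∈ Z, ∃ C, ∀ n, infDist z (A n) ≤ C * ε n) :
    ∃ L ≥ (0 : ℝ), ∀ n, 1 ≤ n → ∀ z ∈ Z, infDist z (A (K n)) ≤ L * ε n * ‖z‖ := by
  have : CompleteSpace Z := hZ.completeSpace_coe
  obtain ⟨z₀, r, hr, C, hC, hball⟩ := exists_ball_forall_le_mul_of_forall_exists
    (f := fun n (z : Z) => infDist (z : X) (A n))
    (fun n => (continuous_infDist_pt _).comp continuous_subtype_val) hε fun z => h z z.2
  refine ⟨4 * C / r, by positivity, fun n hn z hz => ?_⟩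
  have hsmall : ∀ w ∈ Z, ‖w‖ < r → infDist w (A (K n)) ≤ 2 * C * ε n := by
    intro w hw hwr
    have hshift := hball (z₀ + ⟨w, hw⟩) (by simpa [dist_eq_norm] using hwr) n
    have hcentre := hball z₀ (mem_ball_self hr) n
    simp only [Submodule.coe_add] at hshift
    calc infDist w (A (K n)) = infDist (((z₀ : X) + w) + (-1 : ℝ) • (z₀ : X)) (A (K n)) := by
          rw [neg_one_smul, add_neg_cancel_comm]
      _ ≤ infDist ((z₀ : X) + w) (A n) + infDist ((-1 : ℝ) • (z₀ : X)) (A n) :=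
          infDist_add_le_of_add_subset (hA.nonempty hn) (hA.2.1 n).2 _ _
      _ ≤ 2 * C * ε n := by
          rw [infDist_smul_of_forall_smul_subset (hA.2.2.1 n), abs_neg, abs_one, one_mul]
          linarith
  calc infDist z (A (K n)) ≤ 2 * (2 * C * ε n) / r * ‖z‖ :=
        infDist_le_mul_norm_of_forall_norm_lt (hA.2.2.1 _) hr hsmall hz
    _ = 4 * C / r * ε n * ‖z‖ := by ring

end IsApproximationScheme

theorem shapiro_perturbation_general
    {X : Type*} [NormedAddCommGroup X] [NormedSpace ℝ X] [CompleteSpace X]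
    (A : ℕ → Set X) (K : ℕ → ℕ) (hA : IsApproximationScheme A K)
    (Y : Submodule ℝ X)
    (hShapY : ∀ ε : ℕ → ℝ, NullSeq ε →
      ∃ y ∈ Y, ¬ ∃ C : ℝ, ∀ n : ℕ, infDist y (A n) ≤ C * ε n) :
    ∃ δ > (0 : ℝ), ∀ Z : Submodule ℝ X, IsClosed (Z : Set X) →
      sphereSupDist (Y : Set X) (Z : Set X) < δ →
      ∀ ε : ℕ → ℝ, NullSeq ε →
        ∃ z ∈ Z, ¬ ∃ C : ℝ, ∀ n : ℕ, infDist z (A n) ≤ C * ε n := by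
  obtain ⟨c, hc, hcd⟩ := hA.exists_pos_eventually_le_sphereSupDist Y hShapY
  refine ⟨c / 2, half_pos hc, fun Z hZc hZ ε hε => ?_⟩
  by_contra! hbound
  obtain ⟨L, hL, hLZ⟩ := hA.exists_infDist_le_mul_norm hZc hε.1 hbound
  have hK : Tendsto K atTop atTop := tendsto_atTop_mono (fun n => (hA.2.1 n).1) tendsto_id
  have hle : ∀ᶠ n in atTop, c ≤ c / 2 + L * ε n * (1 + c / 2) := by
    filter_upwards [hK.eventually hcd, eventually_ge_atTop 1] with n hcn hn
    exact hcn.trans (sphereSupDist_le_of_infDist_le_mul_norm hZ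
      (mul_nonneg hL (hε.1 n)) (hLZ n hn))
  have hlim : Tendsto (fun n => c / 2 + L * ε n * (1 + c / 2)) atTop (nhds (c / 2)) := by
    simpa using ((hε.2.2.const_mul L).mul_const (1 + c / 2)).const_add (c / 2)
  linarith [ge_of_tendsto hlim hle]

/-- If a closed subspace `Y` of a Banach space `X` satisfies Shapiro's Theorem relative
to an approximation scheme `(A n)`, then there is `δ > 0` such that every closed
subspace `Z` with `E(S(Y), Z) < δ` also satisfies Shapiro's Theorem relative to `(A n)`. -/
theorem shapiro_perturbation
    {X : Type*} [NormedAddCommGroup X] [NormedSpace ℝ X] [CompleteSpace X]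
    (A : ℕ → Set X) (K : ℕ → ℕ) (hA : IsApproximationScheme A K)
    (Y : Submodule ℝ X) (hYc : IsClosed (Y : Set X))
    (hShapY : ∀ ε : ℕ → ℝ, NullSeq ε →
      ∃ y ∈ Y, ¬ ∃ C : ℝ, ∀ n : ℕ, infDist y (A n) ≤ C * ε n) :
    ∃ δ > (0 : ℝ), ∀ Z : Submodule ℝ X, IsClosed (Z : Set X) →
      sphereSupDist (Y : Set X) (Z : Set X) < δ →
      ∀ ε : ℕ → ℝ, NullSeq ε →
        ∃ z ∈ Z, ¬ ∃ C : ℝ, ∀ n : ℕ, infDist z (A n) ≤ C * ε n :=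
  shapiro_perturbation_general A K hA Y hShapY
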